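/- arXiv:2511.17834 — 4 statements merged into one kernel-verified Lean document; each statement's English description precedes it below -/
import Mathlib

section
/- Let L > 0, let d ≥ 1, and let I be a finite index set. For each k ∈ I let x_k, g_k ∈ ℝ^d and f_k ∈ ℝ. Then there exists an L-smooth convex function f : ℝ^d → ℝ with f(x_k) = f_k and ∇f(x_k) = g_k for every k ∈ I if and only if for every pair i, j ∈ I one has f_j − f_i + ⟨g_j, x_i − x_j⟩ + (1/(2L)) ‖g_i − g_j‖² ≤ 0. -/
/-!
Necessity: an `L`-smooth convex function lies above its tangent planes and below its tangent
planes plus `L / 2 * ‖·‖ ^ 2`. Comparing the lower bound at `a` with the upper bound at `b`, both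
at the gradient step `b - L⁻¹ • (∇f b - ∇f a)`, gives the interpolation inequality. Conversely,
these two bounds alone force convexity, differentiability and an `L`-Lipschitz gradient.

Sufficiency: put `y k = x k - L⁻¹ • g k` and `c k = f k - ‖g k‖ ^ 2 / (2L)`. The interpolation
inequalities say exactly that the convex function `h w = max_k (c k + ⟪g k, w - y k⟫)` takes the
value `c k` at `y k`. The Moreau envelope of `h` with parameter `1 / L` satisfies both bounds with
gradient `L • (a - prox a)`, and `prox (x k) = y k` because `g k` is a subgradient of `h` at `y k`;
so the envelope interpolates the data.
-/

open RealInnerProductSpace Filter Topology Set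

section FirstOrder

variable {E : Type*} [NormedAddCommGroup E] [InnerProductSpace ℝ E] [CompleteSpace E]
  {f : E → ℝ} {G : E → E} {L : ℝ}

theorem HasGradientAt.hasDerivAt_comp_add_smul {g a v : E} {t : ℝ}
    (hf : HasGradientAt f g (a + t • v)) :
    HasDerivAt (fun s : ℝ => f (a + s • v)) ⟪g, v⟫ t := by
  have hline : HasDerivAt (fun s : ℝ => a + s • v) v t := by
    simpa using ((hasDerivAt_id t).smul_const v).const_add a
  have h := (hasGradientAt_iff_hasFDerivAt.mp hf).comp_hasDerivAt t hline
  simp only [InnerProductSpace.toDual_apply_apply] at h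
  exact h

theorem ConvexOn.add_inner_le_of_hasGradientAt (hf : ConvexOn ℝ univ f) {g a : E}
    (hg : HasGradientAt f g a) (b : E) : f a + ⟪g, b - a⟫ ≤ f b := by
  have hline : ConvexOn ℝ univ fun t : ℝ => f (a + t • (b - a)) := by
    have hcomp : (fun t : ℝ => f (a + t • (b - a))) = f ∘ AffineMap.lineMap a b := by
      ext t
      simp [AffineMap.lineMap_apply, add_comm]
    exact hcomp ▸ hf.comp_affineMap (AffineMap.lineMap a b)
  have hderiv := (hline.le_slope_of_hasDerivAt (mem_univ 0) (mem_univ 1) zero_lt_one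
    (HasGradientAt.hasDerivAt_comp_add_smul (by simpa using hg)))
  simp only [slope_def_field, one_smul, add_sub_cancel, zero_smul, add_zero, sub_zero,
    div_one] at hderiv
  linarith

theorem le_add_inner_add_sq_of_lipschitz_gradient (hG : ∀ u, HasGradientAt f (G u) u)
    (hlip : ∀ u v, ‖G u - G v‖ ≤ L * ‖u - v‖) (a b : E) :
    f b ≤ f a + ⟪G a, b - a⟫ + L / 2 * ‖b - a‖ ^ 2 := by
  set v := b - a
  set ψ : ℝ → ℝ := fun t => f (a + t • v) - t * ⟪G a, v⟫ - L / 2 * t ^ 2 * ‖v‖ ^ 2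
  have hψ : ∀ t, HasDerivAt ψ (⟪G (a + t • v), v⟫ - ⟪G a, v⟫ - L * t * ‖v‖ ^ 2) t := by
    intro t
    have hf : HasDerivAt (fun s : ℝ => f (a + s • v)) ⟪G (a + t • v), v⟫ t :=
      (hG (a + t • v)).hasDerivAt_comp_add_smul
    have hdiff := (hf.sub ((hasDerivAt_id t).mul_const ⟪G a, v⟫)).sub
      (((hasDerivAt_pow 2 t).const_mul (L / 2)).mul_const (‖v‖ ^ 2))
    refine hdiff.congr_deriv ?_
    simp only [one_mul, Nat.cast_ofNat, Nat.add_one_sub_one, pow_one]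
    ring
  have hψ' : ∀ t ∈ interior (Ici (0 : ℝ)),
      ⟪G (a + t • v), v⟫ - ⟪G a, v⟫ - L * t * ‖v‖ ^ 2 ≤ 0 := by
    intro t ht
    rw [interior_Ici, mem_Ioi] at ht
    have hGt : ‖G (a + t • v) - G a‖ ≤ L * (t * ‖v‖) := by
      simpa [norm_smul, abs_of_pos ht] using hlip (a + t • v) a
    rw [sub_nonpos]
    calc ⟪G (a + t • v), v⟫ - ⟪G a, v⟫ = ⟪G (a + t • v) - G a, v⟫ := (inner_sub_left ..).symm
      _ ≤ ‖G (a + t • v) - G a‖ * ‖v‖ := real_inner_le_norm _ _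
      _ ≤ L * (t * ‖v‖) * ‖v‖ := by gcongr
      _ = L * t * ‖v‖ ^ 2 := by ring
  have hanti : AntitoneOn ψ (Ici 0) :=
    antitoneOn_of_hasDerivWithinAt_nonpos (convex_Ici 0)
      (fun t _ => (hψ t).continuousAt.continuousWithinAt) (fun t _ => (hψ t).hasDerivWithinAt)
      hψ'
  have hψ0 : ψ 0 = f a := by simp [ψ]
  have hψ1 : ψ 1 = f b - ⟪G a, v⟫ - L / 2 * ‖v‖ ^ 2 := by simp [ψ, v]
  linarith [hanti (mem_Ici.mpr le_rfl) (mem_Ici.mpr zero_le_one) zero_le_one]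

end FirstOrder

section QuadraticBounds

variable {E : Type*} [NormedAddCommGroup E] [InnerProductSpace ℝ E]
  {f : E → ℝ} {G : E → E} {L : ℝ}

theorem add_inner_add_sq_le_of_bounds (hL : 0 < L) (hlow : ∀ a b, f a + ⟪G a, b - a⟫ ≤ f b)
    (hup : ∀ a b, f b ≤ f a + ⟪G a, b - a⟫ + L / 2 * ‖b - a‖ ^ 2) (a b : E) :
    f a + ⟪G a, b - a⟫ + 1 / (2 * L) * ‖G b - G a‖ ^ 2 ≤ f b := by
  have hz := (hlow a (b - L⁻¹ • (G b - G a))).trans (hup b (b - L⁻¹ • (G b - G a)))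
  have hstep_a : b - L⁻¹ • (G b - G a) - a = (b - a) - L⁻¹ • (G b - G a) := by abel
  have hstep_b : b - L⁻¹ • (G b - G a) - b = -(L⁻¹ • (G b - G a)) := by abel
  rw [hstep_a, hstep_b, norm_neg, norm_smul, Real.norm_eq_abs, abs_of_pos (inv_pos.mpr hL),
    inner_sub_right, inner_neg_right, real_inner_smul_right, real_inner_smul_right] at hz
  have hw : L⁻¹ * ⟪G b, G b - G a⟫ - L⁻¹ * ⟪G a, G b - G a⟫
      = 2 * (1 / (2 * L) * ‖G b - G a‖ ^ 2) := by
    rw [← mul_sub, ← inner_sub_left, real_inner_self_eq_norm_sq]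
    field_simp
  have hsq : L / 2 * (L⁻¹ * ‖G b - G a‖) ^ 2 = 1 / (2 * L) * ‖G b - G a‖ ^ 2 := by
    field_simp
  linarith

theorem norm_sub_le_of_cocoercive (hL : 0 < L)
    (hcoc : ∀ a b, f a + ⟪G a, b - a⟫ + 1 / (2 * L) * ‖G b - G a‖ ^ 2 ≤ f b) (a b : E) :
    ‖G a - G b‖ ≤ L * ‖a - b‖ := by
  have hsum : ‖G a - G b‖ ^ 2 ≤ L * ⟪G a - G b, a - b⟫ := by
    have h₁ := hcoc a b
    have h₂ := hcoc b a
    rw [norm_sub_rev (G b)] at h₁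
    have hinner : ⟪G a - G b, a - b⟫ = -⟪G a, b - a⟫ - ⟪G b, a - b⟫ := by
      rw [inner_sub_left, ← neg_sub b a, inner_neg_right, ← neg_sub a b]
    rw [hinner]
    field_simp at h₁ h₂
    linarith
  have hcs := real_inner_le_norm (G a - G b) (a - b)
  rcases (norm_nonneg (G a - G b)).eq_or_lt with h0 | hpos
  · rw [← h0]
    positivity
  · nlinarith

theorem convexOn_univ_of_add_inner_le (hlow : ∀ a b, f a + ⟪G a, b - a⟫ ≤ f b) :
    ConvexOn ℝ univ f := by
  refine ⟨convex_univ, fun a _ b _ s t hs ht hst => ?_⟩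
  set z := s • a + t • b
  have hza : s • (a - z) + t • (b - z) = 0 := by
    rw [smul_sub, smul_sub, sub_add_sub_comm, ← add_smul, hst, one_smul]
    exact sub_self z
  have hcomb := congrArg (⟪G z, ·⟫) hza
  simp only [inner_add_right, inner_smul_right, inner_zero_right] at hcomb
  have ha := hlow z a
  have hb := hlow z b
  have hfz : f z = s * f z + t * f z := by rw [← add_mul, hst, one_mul]
  simp only [smul_eq_mul]
  nlinarith [mul_le_mul_of_nonneg_left ha hs, mul_le_mul_of_nonneg_left hb ht]

theorem hasGradientAt_of_bounds [CompleteSpace E] (hlow : ∀ a b, f a + ⟪G a, b - a⟫ ≤ f b)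
    (hup : ∀ a b, f b ≤ f a + ⟪G a, b - a⟫ + L / 2 * ‖b - a‖ ^ 2) (a : E) :
    HasGradientAt f (G a) a := by
  rw [hasGradientAt_iff_hasFDerivAt, hasFDerivAt_iff_isLittleO_nhds_zero]
  refine Asymptotics.IsBigO.trans_isLittleO ?_ (Asymptotics.isLittleO_norm_pow_id one_lt_two)
  refine Asymptotics.IsBigO.of_bound (|L| / 2) (Eventually.of_forall fun v => ?_)
  have h₁ := hlow a (a + v)
  have h₂ := hup a (a + v)
  rw [add_sub_cancel_left] at h₁ h₂
  rw [InnerProductSpace.toDual_apply_apply, Real.norm_eq_abs, norm_pow, norm_norm, abs_le]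
  constructor
  · nlinarith [abs_nonneg L, sq_nonneg ‖v‖]
  · nlinarith [le_abs_self L, sq_nonneg ‖v‖]

theorem smoothConvex_of_bounds [CompleteSpace E] (hL : 0 < L)
    (hlow : ∀ a b, f a + ⟪G a, b - a⟫ ≤ f b)
    (hup : ∀ a b, f b ≤ f a + ⟪G a, b - a⟫ + L / 2 * ‖b - a‖ ^ 2) :
    ConvexOn ℝ univ f ∧ Differentiable ℝ f ∧
      (∀ u v, ‖gradient f u - gradient f v‖ ≤ L * ‖u - v‖) ∧ gradient f = G := by
  have hgrad : gradient f = G := funext fun a => (hasGradientAt_of_bounds hlow hup a).gradient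
  refine ⟨convexOn_univ_of_add_inner_le hlow,
    fun a => (hasGradientAt_of_bounds hlow hup a).differentiableAt, ?_, hgrad⟩
  rw [hgrad]
  exact norm_sub_le_of_cocoercive hL (add_inner_add_sq_le_of_bounds hL hlow hup)

end QuadraticBounds

section Proximal

variable {E : Type*} [NormedAddCommGroup E] [InnerProductSpace ℝ E]
  {h : E → ℝ} {L : ℝ} {p : E → E}

def IsProximalMap (L : ℝ) (h : E → ℝ) (p : E → E) : Prop :=
  ∀ a w, h (p a) + L / 2 * ‖a - p a‖ ^ 2 ≤ h w + L / 2 * ‖a - w‖ ^ 2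

/-- The Moreau envelope `a ↦ inf_w (h w + L / 2 * ‖a - w‖ ^ 2)`, evaluated through a proximal
map `p` of `h` that attains the infimum. -/
noncomputable def moreauEnvelope (L : ℝ) (h : E → ℝ) (p : E → E) (a : E) : ℝ :=
  h (p a) + L / 2 * ‖a - p a‖ ^ 2

theorem exists_isProximalMap [ProperSpace E] (hL : 0 < L) (hh : Continuous h) {y s : E}
    (hs : ∀ w, h y + ⟪s, w - y⟫ ≤ h w) : ∃ p, IsProximalMap L h p := by
  suffices ∀ a, ∃ q, ∀ w, h q + L / 2 * ‖a - q‖ ^ 2 ≤ h w + L / 2 * ‖a - w‖ ^ 2 by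
    choose p hp using this
    exact ⟨p, hp⟩
  intro a
  set K := h y + ⟪s, a - y⟫
  have hbound : ∀ w, K + dist w a * (L / 2 * dist w a - ‖s‖) ≤ h w + L / 2 * ‖a - w‖ ^ 2 := by
    intro w
    have hsw : -(‖s‖ * ‖w - a‖) ≤ ⟪s, w - a⟫ := neg_le_of_abs_le (abs_real_inner_le_norm _ _)
    have hsplit : ⟪s, w - y⟫ = ⟪s, a - y⟫ + ⟪s, w - a⟫ := by
      rw [← inner_add_right, sub_add_sub_cancel']
    rw [dist_eq_norm, norm_sub_rev a w]
    nlinarith [hs w]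
  have hcoercive : Tendsto (fun r : ℝ => K + r * (L / 2 * r - ‖s‖)) atTop atTop :=
    tendsto_atTop_add_const_left _ _ (tendsto_id.atTop_mul_atTop₀
      (tendsto_atTop_add_const_right _ _ (tendsto_id.const_mul_atTop (by positivity))))
  exact (hh.add (continuous_const.mul ((continuous_const.sub continuous_id).norm.pow 2))
    ).exists_forall_le (tendsto_atTop_mono hbound
      (hcoercive.comp (tendsto_dist_right_cocompact_atTop a)))

theorem IsProximalMap.add_inner_le (hp : IsProximalMap L h p) (hh : ConvexOn ℝ univ h)
    (a w : E) : h (p a) + L * ⟪a - p a, w - p a⟫ ≤ h w := by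
  set u := a - p a
  set d := w - p a
  -- compare `p a` with the points `p a + t • d` of the segment to `w`, then let `t → 0⁺`
  have hsegment : ∀ t ∈ Ioc (0 : ℝ) 1, h (p a) + L * ⟪u, d⟫ ≤ h w + L / 2 * t * ‖d‖ ^ 2 := by
    rintro t ⟨ht0, ht1⟩
    have hmin := hp a (p a + t • d)
    have hconv : h (p a + t • d) ≤ (1 - t) * h (p a) + t * h w := by
      have hcomb : p a + t • d = (1 - t) • p a + t • w := by simp only [d]; module
      rw [hcomb]
      exact hh.2 (mem_univ _) (mem_univ _) (by linarith) ht0.le (by ring)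
    have hnorm : ‖a - (p a + t • d)‖ ^ 2 = ‖u‖ ^ 2 - 2 * (t * ⟪u, d⟫) + t ^ 2 * ‖d‖ ^ 2 := by
      rw [← sub_sub, norm_sub_sq_real, real_inner_smul_right, norm_smul, Real.norm_eq_abs,
        mul_pow, sq_abs]
    rw [hnorm] at hmin
    have hscaled : t * (h (p a) + L * ⟪u, d⟫) ≤ t * (h w + L / 2 * t * ‖d‖ ^ 2) := by nlinarith
    exact le_of_mul_le_mul_left hscaled ht0
  have hlim : Tendsto (fun t : ℝ => h w + L / 2 * t * ‖d‖ ^ 2) (𝓝[>] 0) (𝓝 (h w)) := by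
    have hcont : Continuous fun t : ℝ => h w + L / 2 * t * ‖d‖ ^ 2 := by fun_prop
    simpa using (hcont.tendsto 0).mono_left nhdsWithin_le_nhds
  exact ge_of_tendsto hlim (eventually_of_mem (Ioc_mem_nhdsGT one_pos) hsegment)

theorem IsProximalMap.moreauEnvelope_add_inner_le (hp : IsProximalMap L h p)
    (hh : ConvexOn ℝ univ h) (hL : 0 ≤ L) (a b : E) :
    moreauEnvelope L h p a + ⟪L • (a - p a), b - a⟫ ≤ moreauEnvelope L h p b := by
  have hsub := hp.add_inner_le hh a (p b)
  have hpb : p b - p a = (b - a) + (a - p a) - (b - p b) := by abel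
  rw [hpb, inner_sub_right, inner_add_right, real_inner_self_eq_norm_sq] at hsub
  have hgap := norm_sub_sq_real (a - p a) (b - p b)
  simp only [moreauEnvelope, real_inner_smul_left]
  nlinarith [mul_nonneg hL (sq_nonneg ‖(a - p a) - (b - p b)‖)]

theorem IsProximalMap.moreauEnvelope_le (hp : IsProximalMap L h p) (a b : E) :
    moreauEnvelope L h p b ≤
      moreauEnvelope L h p a + ⟪L • (a - p a), b - a⟫ + L / 2 * ‖b - a‖ ^ 2 := by
  have hmin := hp b (p a)
  have hsplit : b - p a = (a - p a) + (b - a) := by abel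
  rw [hsplit, norm_add_sq_real] at hmin
  simp only [moreauEnvelope, real_inner_smul_left]
  linarith

theorem IsProximalMap.apply_add_smul_eq (hp : IsProximalMap L h p) (hL : 0 < L) {y s : E}
    (hs : ∀ w, h y + ⟪s, w - y⟫ ≤ h w) : p (y + L⁻¹ • s) = y := by
  set a := y + L⁻¹ • s
  set q := p a
  have hmin := hp a y
  have hnorm : ∀ w, ‖a - w‖ ^ 2 = L⁻¹ ^ 2 * ‖s‖ ^ 2 - 2 * (L⁻¹ * ⟪s, w - y⟫) + ‖w - y‖ ^ 2 := by
    intro w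
    rw [show a - w = L⁻¹ • s - (w - y) by simp only [a]; abel, norm_sub_sq_real,
      real_inner_smul_left, norm_smul, Real.norm_eq_abs, mul_pow, sq_abs]
  rw [hnorm, hnorm, sub_self, inner_zero_right, norm_zero] at hmin
  have hq := hs q
  have hLinv : L / 2 * (2 * (L⁻¹ * ⟪s, q - y⟫)) = ⟪s, q - y⟫ := by field_simp
  have hdist : ‖q - y‖ ^ 2 ≤ 0 := by nlinarith
  have hzero : ‖q - y‖ = 0 := pow_eq_zero_iff two_ne_zero |>.mp (le_antisymm hdist (sq_nonneg _))
  exact sub_eq_zero.mp (norm_eq_zero.mp hzero)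

end Proximal

section MaxAffine

variable {E : Type*} [NormedAddCommGroup E] [InnerProductSpace ℝ E]
  {ι : Type*} [Fintype ι] [Nonempty ι] {c : ι → ℝ} {g y : ι → E}

noncomputable def maxAffine (c : ι → ℝ) (g y : ι → E) (w : E) : ℝ :=
  Finset.univ.sup' Finset.univ_nonempty fun j => c j + ⟪g j, w - y j⟫

theorem le_maxAffine (j : ι) (w : E) : c j + ⟪g j, w - y j⟫ ≤ maxAffine c g y w :=
  Finset.le_sup' (fun j => c j + ⟪g j, w - y j⟫) (Finset.mem_univ j)

theorem continuous_maxAffine : Continuous (maxAffine c g y) :=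
  Continuous.finset_sup'_apply _ fun j _ => by fun_prop

theorem convexOn_maxAffine : ConvexOn ℝ univ (maxAffine c g y) := by
  have hactive : ∀ w, ∃ j, maxAffine c g y w = c j + ⟪g j, w - y j⟫ := fun w => by
    obtain ⟨j, -, hj⟩ := Finset.exists_mem_eq_sup' Finset.univ_nonempty
      fun j => c j + ⟪g j, w - y j⟫
    exact ⟨j, hj⟩
  choose j hj using hactive
  refine convexOn_univ_of_add_inner_le (G := fun w => g (j w)) fun a b => ?_
  have hab : b - y (j a) = (a - y (j a)) + (b - a) := by abel
  calc maxAffine c g y a + ⟪g (j a), b - a⟫ = c (j a) + ⟪g (j a), b - y (j a)⟫ := by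
        rw [hj, hab, inner_add_right, add_assoc]
    _ ≤ maxAffine c g y b := le_maxAffine _ _

theorem maxAffine_apply_of_le {k : ι} (hk : ∀ j, c j + ⟪g j, y k - y j⟫ ≤ c k) :
    maxAffine c g y (y k) = c k :=
  le_antisymm (Finset.sup'_le _ _ fun j _ => hk j) (by simpa using le_maxAffine (y := y) k (y k))

end MaxAffine

section Interpolation

variable {E : Type*} [NormedAddCommGroup E] [InnerProductSpace ℝ E] [ProperSpace E]
  {ι : Type*} [Fintype ι] {L : ℝ}

theorem exists_smoothConvex_interpolant (hL : 0 < L) (x g : ι → E) (fv : ι → ℝ)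
    (hij : ∀ i j, fv j - fv i + ⟪g j, x i - x j⟫ + 1 / (2 * L) * ‖g i - g j‖ ^ 2 ≤ 0) :
    ∃ f : E → ℝ, ConvexOn ℝ univ f ∧ Differentiable ℝ f ∧
      (∀ u v, ‖gradient f u - gradient f v‖ ≤ L * ‖u - v‖) ∧
      (∀ k, f (x k) = fv k) ∧ (∀ k, gradient f (x k) = g k) := by
  rcases isEmpty_or_nonempty ι with hι | hι
  · obtain ⟨hconv, hdiff, hlip, -⟩ :=
      smoothConvex_of_bounds (f := fun _ : E => (0 : ℝ)) (G := fun _ => 0) hL (fun _ _ => by simp)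
        fun _ _ => by simp only [inner_zero_left, add_zero, zero_add]; positivity
    exact ⟨_, hconv, hdiff, hlip, isEmptyElim, isEmptyElim⟩
  set y := fun k => x k - L⁻¹ • g k
  set c := fun k => fv k - 1 / (2 * L) * ‖g k‖ ^ 2
  have hxy : ∀ k, x k - y k = L⁻¹ • g k := fun k => sub_sub_cancel _ _
  have hval : ∀ k, maxAffine c g y (y k) = c k := fun k => maxAffine_apply_of_le fun j => by
    have hyy : y k - y j = (x k - x j) + L⁻¹ • (g j - g k) := by simp only [y, smul_sub]; abel
    have hgap : c j + ⟪g j, y k - y j⟫ - c k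
        = fv j - fv k + ⟪g j, x k - x j⟫ + 1 / (2 * L) * ‖g k - g j‖ ^ 2 := by
      rw [hyy, inner_add_right, real_inner_smul_right, inner_sub_right (g j) (g j),
        real_inner_self_eq_norm_sq, norm_sub_sq_real, real_inner_comm (g k)]
      simp only [c]
      field_simp
      ring
    linarith [hij k j]
  have hsubgrad : ∀ k w, maxAffine c g y (y k) + ⟪g k, w - y k⟫ ≤ maxAffine c g y w :=
    fun k w => (hval k).symm ▸ le_maxAffine k w
  obtain ⟨p, hp⟩ := exists_isProximalMap hL continuous_maxAffine (hsubgrad hι.some)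
  have hpx : ∀ k, p (x k) = y k := fun k => by
    simpa [y] using hp.apply_add_smul_eq hL (hsubgrad k)
  obtain ⟨hconv, hdiff, hlip, hgrad⟩ := smoothConvex_of_bounds hL
    (hp.moreauEnvelope_add_inner_le convexOn_maxAffine hL.le) hp.moreauEnvelope_le
  refine ⟨moreauEnvelope L (maxAffine c g y) p, hconv, hdiff, hlip, fun k => ?_, fun k => ?_⟩
  · rw [moreauEnvelope, hpx, hval, hxy, norm_smul, Real.norm_eq_abs, abs_of_pos (inv_pos.mpr hL)]
    simp only [c]
    field_simp
    ring
  · simp only [hgrad, hpx, hxy, smul_smul, mul_inv_cancel₀ hL.ne', one_smul]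

end Interpolation

theorem smooth_convex_interpolation_general
    (d : ℕ) (L : ℝ) (hL : 0 < L)
    (ι : Type*) [Fintype ι]
    (x g : ι → EuclideanSpace ℝ (Fin d)) (fv : ι → ℝ) :
    (∃ f : EuclideanSpace ℝ (Fin d) → ℝ,
        ConvexOn ℝ Set.univ f ∧ Differentiable ℝ f ∧
        (∀ u v : EuclideanSpace ℝ (Fin d), ‖gradient f u - gradient f v‖ ≤ L * ‖u - v‖) ∧
        (∀ k, f (x k) = fv k) ∧ (∀ k, gradient f (x k) = g k)) ↔
      ∀ i j : ι,
        fv j - fv i + ⟪g j, x i - x j⟫ + (1 / (2 * L)) * ‖g i - g j‖ ^ 2 ≤ 0 := by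
  refine ⟨fun ⟨f, hconv, hdiff, hlip, hfx, hgx⟩ i j => ?_,
    exists_smoothConvex_interpolant hL x g fv⟩
  have hG : ∀ u, HasGradientAt f (gradient f u) u := fun u => (hdiff u).hasGradientAt
  have hcoc := add_inner_add_sq_le_of_bounds hL
    (fun a b => hconv.add_inner_le_of_hasGradientAt (hG a) b)
    (le_add_inner_add_sq_of_lipschitz_gradient hG hlip) (x j) (x i)
  rw [hfx, hfx, hgx, hgx] at hcoc
  linarith

/-- **Interpolation conditions for `L`-smooth convex functions.**
A finite family of triples `(x k, g k, fv k)` is interpolable by an `L`-smooth convex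
function (convex, differentiable, with `L`-Lipschitz gradient) if and only if the
quadratic interpolation inequalities hold for every pair of indices. -/
theorem smooth_convex_interpolation
    (d : ℕ) (hd : 1 ≤ d) (L : ℝ) (hL : 0 < L)
    (ι : Type*) [Fintype ι]
    (x g : ι → EuclideanSpace ℝ (Fin d)) (fv : ι → ℝ) :
    (∃ f : EuclideanSpace ℝ (Fin d) → ℝ,
        ConvexOn ℝ Set.univ f ∧ Differentiable ℝ f ∧
        (∀ u v : EuclideanSpace ℝ (Fin d), ‖gradient f u - gradient f v‖ ≤ L * ‖u - v‖) ∧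
        (∀ k, f (x k) = fv k) ∧ (∀ k, gradient f (x k) = g k)) ↔
      ∀ i j : ι,
        fv j - fv i + ⟪g j, x i - x j⟫ + (1 / (2 * L)) * ‖g i - g j‖ ^ 2 ≤ 0 :=
  smooth_convex_interpolation_general d L hL ι x g fv
end

section
/- For any real matrices A, B ∈ ℝ^{d×n} one has ‖AᵀA − BᵀB‖_F ≤ ‖A + B‖_op · ‖A − B‖_F, where ‖·‖_op is the operator norm induced by the Euclidean norm and ‖·‖_F is the Frobenius norm. -/
open Matrix

/-- Frobenius norm of a real matrix. -/
noncomputable def frobNorm {d n : ℕ} (A : Matrix (Fin d) (Fin n) ℝ) : ℝ :=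
  Real.sqrt (∑ r, ∑ c, (A r c) ^ 2)

/-- Euclidean norm of a vector in `ℝ^k`. -/
noncomputable def eucNorm {k : ℕ} (v : Fin k → ℝ) : ℝ :=
  Real.sqrt (∑ i, (v i) ^ 2)

/-- Operator norm induced by the Euclidean norms: `‖M‖_op = sup_{‖v‖ ≤ 1} ‖M v‖`. -/
noncomputable def opNorm {d n : ℕ} (M : Matrix (Fin d) (Fin n) ℝ) : ℝ :=
  sSup {c : ℝ | ∃ v : Fin n → ℝ, eucNorm v ≤ 1 ∧ c = eucNorm (M.mulVec v)}

/-! With `S = A + B` and `C = A - B` one has the polarization identity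
`2 (AᵀA - BᵀB) = SᵀC + (SᵀC)ᵀ`. The Frobenius norm is invariant under transposition, and
`‖SᵀC‖_F ≤ ‖Sᵀ‖_op ‖C‖_F` because the columns of `SᵀC` are the images `Sᵀ c_j` of the columns of
`C`; finally `‖Sᵀ‖_op = ‖S‖_op`. -/

theorem two_smul_gram_sub_gram {R m n : Type*} [Fintype m] [CommRing R] (A B : Matrix m n R) :
    (2 : R) • (Aᵀ * A - Bᵀ * B) = (A + B)ᵀ * (A - B) + ((A + B)ᵀ * (A - B))ᵀ := by
  simp only [transpose_mul, transpose_transpose, transpose_add, transpose_sub,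
    Matrix.add_mul, Matrix.mul_sub, two_smul]
  abel

section Frobenius

attribute [local instance] Matrix.frobeniusNormedAddCommGroup Matrix.frobeniusNormedSpace

variable {d n : ℕ}

theorem frobNorm_eq_frobenius_norm (A : Matrix (Fin d) (Fin n) ℝ) : frobNorm A = ‖A‖ := by
  simp [frobNorm, frobenius_norm_def, Real.sqrt_eq_rpow]

theorem frobNorm_add_le (A B : Matrix (Fin d) (Fin n) ℝ) :
    frobNorm (A + B) ≤ frobNorm A + frobNorm B := by
  simpa only [frobNorm_eq_frobenius_norm] using norm_add_le A B

theorem frobNorm_smul (c : ℝ) (A : Matrix (Fin d) (Fin n) ℝ) :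
    frobNorm (c • A) = |c| * frobNorm A := by
  simp only [frobNorm_eq_frobenius_norm, norm_smul, Real.norm_eq_abs]

theorem frobNorm_transpose (A : Matrix (Fin d) (Fin n) ℝ) : frobNorm Aᵀ = frobNorm A := by
  simp only [frobNorm_eq_frobenius_norm, frobenius_norm_transpose]

end Frobenius

theorem eucNorm_eq_norm_toLp {k : ℕ} (v : Fin k → ℝ) : eucNorm v = ‖WithLp.toLp 2 v‖ := by
  simp [eucNorm, EuclideanSpace.norm_eq]

theorem eucNorm_sq {k : ℕ} (v : Fin k → ℝ) : eucNorm v ^ 2 = ∑ i, v i ^ 2 :=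
  Real.sq_sqrt (by positivity)

theorem frobNorm_sq_eq_sum_eucNorm_col_sq {d n : ℕ} (A : Matrix (Fin d) (Fin n) ℝ) :
    frobNorm A ^ 2 = ∑ j, eucNorm (Aᵀ j) ^ 2 := by
  rw [frobNorm, Real.sq_sqrt (by positivity), Finset.sum_comm]
  simp only [eucNorm_sq, transpose_apply]

open scoped Matrix.Norms.L2Operator

theorem opNorm_eq_l2_opNorm {d n : ℕ} (M : Matrix (Fin d) (Fin n) ℝ) : opNorm M = ‖M‖ := by
  rw [M.l2_opNorm_def, ← ContinuousLinearMap.sSup_unitClosedBall_eq_norm, opNorm]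
  congr 1
  ext c
  constructor
  · rintro ⟨v, hv, rfl⟩
    refine ⟨WithLp.toLp 2 v, ?_, ?_⟩
    · simpa [eucNorm_eq_norm_toLp] using hv
    · simp [eucNorm_eq_norm_toLp]
  · rintro ⟨x, hx, rfl⟩
    refine ⟨x.ofLp, ?_, ?_⟩
    · simpa [eucNorm_eq_norm_toLp] using hx
    · rw [eucNorm_eq_norm_toLp]
      rfl

theorem eucNorm_mulVec_le {a b : ℕ} (M : Matrix (Fin a) (Fin b) ℝ) (v : Fin b → ℝ) :
    eucNorm (M *ᵥ v) ≤ ‖M‖ * eucNorm v := by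
  rw [eucNorm_eq_norm_toLp, eucNorm_eq_norm_toLp]
  exact M.l2_opNorm_mulVec (WithLp.toLp 2 v)

theorem frobNorm_mul_le {a b c : ℕ} (M : Matrix (Fin a) (Fin b) ℝ) (C : Matrix (Fin b) (Fin c) ℝ) :
    frobNorm (M * C) ≤ ‖M‖ * frobNorm C := by
  have hM : 0 ≤ ‖M‖ := norm_nonneg M
  have hC : 0 ≤ frobNorm C := Real.sqrt_nonneg _
  refine le_of_sq_le_sq ?_ (by positivity)
  calc frobNorm (M * C) ^ 2 = ∑ j, eucNorm (M *ᵥ Cᵀ j) ^ 2 := by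
        rw [frobNorm_sq_eq_sum_eucNorm_col_sq]
        rfl
    _ ≤ ∑ j, (‖M‖ * eucNorm (Cᵀ j)) ^ 2 := by
        gcongr with j
        exacts [Real.sqrt_nonneg _, eucNorm_mulVec_le M _]
    _ = (‖M‖ * frobNorm C) ^ 2 := by
        rw [mul_pow, frobNorm_sq_eq_sum_eucNorm_col_sq, Finset.mul_sum]
        simp only [mul_pow]

theorem l2_opNorm_transpose {m n : Type*} [Fintype m] [Fintype n] [DecidableEq m] [DecidableEq n]
    (M : Matrix m n ℝ) : ‖Mᵀ‖ = ‖M‖ := by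
  rw [← conjTranspose_eq_transpose_of_trivial, l2_opNorm_conjTranspose]

/-- **Gram matrix perturbation bound**: `‖AᵀA − BᵀB‖_F ≤ ‖A + B‖_op ‖A − B‖_F`. -/
theorem gram_diff_frobenius_bound {d n : ℕ} (A B : Matrix (Fin d) (Fin n) ℝ) :
    frobNorm (Aᵀ * A - Bᵀ * B) ≤ opNorm (A + B) * frobNorm (A - B) := by
  have htriangle := frobNorm_add_le ((A + B)ᵀ * (A - B)) ((A + B)ᵀ * (A - B))ᵀ
  rw [← two_smul_gram_sub_gram, frobNorm_smul, frobNorm_transpose, abs_two] at htriangle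
  have hmul := frobNorm_mul_le (A + B)ᵀ (A - B)
  rw [l2_opNorm_transpose] at hmul
  rw [opNorm_eq_l2_opNorm]
  linarith
end

section
/- Fix integers K ≥ 0, N ≥ 1, J ≥ 1, a finite index set M, data A_m ∈ S^{K+2}, b_m ∈ ℝ^{K+1} (m ∈ M), A₀ ∈ S^{K+2}, b₀ ∈ ℝ^{K+1}, c₀ ∈ ℝ, objective data A_obj^j ∈ S^{K+2}, b_obj^j ∈ ℝ^{K+1}, c_obj^j ∈ ℝ (j = 1, …, J), samples (Ĝ_i, F̂_i) ∈ S^{K+2} × ℝ^{K+1} (i = 1, …, N), and ε ≥ 0. Suppose we are given a primal-feasible point with weights α_i^j and pairs (G_i^j, F_i^j), and a dual-feasible point with data (s, t, λ, τ_i^j, y_i^j, X_i^j, Y_i^j). Then Σ_{i=1}^N Σ_{j=1}^J α_i^j ⟨(A_obj^j, b_obj^j), (G_i^j, F_i^j)⟩ ≤ (1/N) Σ_{i=1}^N s_i (weak duality between the maximization and minimization forms of the DRO-PEP problem). -/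
/-! For each pair `(i, j)` the dual constraints are a Lagrangian certificate: pairing the PSD
slack matrix with `G ⪰ 0` (the trace of a product of PSD matrices is nonnegative), using the
equality constraint on the vector part and the signs of `y` and `τ`, the objective at `(G, F)` is
at most `-c₀ τ - ⟨(X, Y), (G, F)⟩`. Cauchy–Schwarz with `‖(X, Y)‖ ≤ λ` moves the pairing to the
sample `(Ĝ, F̂)` at a cost of `λ ‖(G - Ĝ, F - F̂)‖`, so the first dual constraint bounds the
objective by `s_i - c_obj^j t - λ ε + λ ‖(G - Ĝ, F - F̂)‖`. Averaging with the weights `α`, the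
`t` terms cancel and the transport budget `ε` absorbs the `λ` terms. -/

open Matrix

/-- Inner product `⟨(X,Y),(G,F)⟩ = tr(X G) + Yᵀ F` on pairs of a symmetric matrix and a
vector. -/
noncomputable def pairIP {K : ℕ}
    (X : Matrix (Fin (K + 2)) (Fin (K + 2)) ℝ) (Y : Fin (K + 1) → ℝ)
    (G : Matrix (Fin (K + 2)) (Fin (K + 2)) ℝ) (F : Fin (K + 1) → ℝ) : ℝ :=
  (X * G).trace + ∑ k, Y k * F k

/-- Norm `‖(G,F)‖ = sqrt(‖G‖_F² + ‖F‖²)` on pairs. -/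
noncomputable def pairNorm {K : ℕ}
    (G : Matrix (Fin (K + 2)) (Fin (K + 2)) ℝ) (F : Fin (K + 1) → ℝ) : ℝ :=
  Real.sqrt ((∑ r, ∑ c, (G r c) ^ 2) + ∑ k, (F k) ^ 2)

open scoped ComplexOrder MatrixOrder Matrix.Norms.L2Operator in
theorem Matrix.PosSemidef.trace_mul_nonneg {n 𝕜 : Type*} [Fintype n] [RCLike 𝕜]
    {P G : Matrix n n 𝕜} (hP : P.PosSemidef) (hG : G.PosSemidef) : 0 ≤ (P * G).trace := by
  classical
  obtain ⟨B, rfl⟩ := CStarAlgebra.nonneg_iff_eq_star_mul_self.mp hG.nonneg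
  rw [star_eq_conjTranspose, ← Matrix.mul_assoc, trace_mul_comm, ← Matrix.mul_assoc]
  exact (hP.mul_mul_conjTranspose_same B).trace_nonneg

section pairIP

variable {K : ℕ} (X X' : Matrix (Fin (K + 2)) (Fin (K + 2)) ℝ) (Y Y' : Fin (K + 1) → ℝ)
  (G G' : Matrix (Fin (K + 2)) (Fin (K + 2)) ℝ) (F F' : Fin (K + 1) → ℝ)

lemma pairIP_add_left : pairIP (X + X') (Y + Y') G F = pairIP X Y G F + pairIP X' Y' G F := by
  simp only [pairIP, trace_add, Pi.add_apply, add_mul, Finset.sum_add_distrib]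
  ring

lemma pairIP_sub_left : pairIP (X - X') (Y - Y') G F = pairIP X Y G F - pairIP X' Y' G F := by
  simp only [pairIP, trace_sub, Pi.sub_apply, sub_mul, Finset.sum_sub_distrib]
  ring

lemma pairIP_smul_left (c : ℝ) : pairIP (c • X) (c • Y) G F = c * pairIP X Y G F := by
  simp only [pairIP, Matrix.smul_mul, trace_smul, Pi.smul_apply, smul_eq_mul, mul_assoc,
    ← Finset.mul_sum, mul_add]

lemma pairIP_sum_left {ι : Type*} (s : Finset ι) (X : ι → Matrix (Fin (K + 2)) (Fin (K + 2)) ℝ)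
    (Y : ι → Fin (K + 1) → ℝ) :
    pairIP (∑ m ∈ s, X m) (∑ m ∈ s, Y m) G F = ∑ m ∈ s, pairIP (X m) (Y m) G F := by
  classical
  induction s using Finset.induction_on with
  | empty => simp [pairIP]
  | insert a s ha ih => rw [Finset.sum_insert ha, Finset.sum_insert ha, Finset.sum_insert ha,
      pairIP_add_left, ih]

lemma pairIP_zero_left_vec : pairIP X 0 G F = (X * G).trace := by
  simp [pairIP]

lemma pairIP_sub_right : pairIP X Y (G - G') (F - F') = pairIP X Y G F - pairIP X Y G' F' := by
  simp only [pairIP, trace_sub, Pi.sub_apply, mul_sub, Finset.sum_sub_distrib]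
  ring

lemma abs_pairIP_le : |pairIP X Y G F| ≤ pairNorm X Y * pairNorm G F := by
  -- `tr (X * G)` pairs the entries of `X` with those of `Gᵀ`
  let u : (Fin (K + 2) × Fin (K + 2)) ⊕ Fin (K + 1) → ℝ := Sum.elim (fun p ↦ X p.1 p.2) Y
  let v : (Fin (K + 2) × Fin (K + 2)) ⊕ Fin (K + 1) → ℝ := Sum.elim (fun p ↦ G p.2 p.1) F
  have hIP : pairIP X Y G F = ∑ z, u z * v z := by
    simp [pairIP, trace, mul_apply, Fintype.sum_sum_type, Fintype.sum_prod_type, u, v]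
  have hu : pairNorm X Y = √(∑ z, u z ^ 2) := by
    simp [pairNorm, Fintype.sum_sum_type, Fintype.sum_prod_type, u]
  have hv : pairNorm G F = √(∑ z, v z ^ 2) := by
    simp only [pairNorm, Fintype.sum_sum_type, Fintype.sum_prod_type, v, Sum.elim_inl,
      Sum.elim_inr]
    rw [Finset.sum_comm]
  rw [hIP, hu, hv, ← Real.sqrt_mul (by positivity), ← Real.sqrt_sq_eq_abs]
  exact Real.sqrt_le_sqrt (Finset.sum_mul_sq_le_sq_mul_sq _ u v)

end pairIP

lemma pairIP_sub_le_of_pairNorm_le {K : ℕ} {X : Matrix (Fin (K + 2)) (Fin (K + 2)) ℝ}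
    {Y : Fin (K + 1) → ℝ} {lam : ℝ} (hXY : pairNorm X Y ≤ lam)
    (G Gh : Matrix (Fin (K + 2)) (Fin (K + 2)) ℝ) (F Fh : Fin (K + 1) → ℝ) :
    pairIP X Y Gh Fh - lam * pairNorm (G - Gh) (F - Fh) ≤ pairIP X Y G F := by
  have hCS := abs_pairIP_le X Y (G - Gh) (F - Fh)
  have hlam : pairNorm X Y * pairNorm (G - Gh) (F - Fh) ≤ lam * pairNorm (G - Gh) (F - Fh) :=
    mul_le_mul_of_nonneg_right hXY (Real.sqrt_nonneg _)
  rw [pairIP_sub_right] at hCS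
  linarith [neg_abs_le (pairIP X Y G F - pairIP X Y Gh Fh)]

lemma pairIP_add_le_of_dual_certificate {K : ℕ} {M : Type*} [Fintype M]
    {X G : Matrix (Fin (K + 2)) (Fin (K + 2)) ℝ} {Y F : Fin (K + 1) → ℝ}
    {A : M → Matrix (Fin (K + 2)) (Fin (K + 2)) ℝ} {b : M → Fin (K + 1) → ℝ}
    {A₀ Aobj : Matrix (Fin (K + 2)) (Fin (K + 2)) ℝ} {b₀ bobj : Fin (K + 1) → ℝ} {c₀ τ : ℝ}
    {y : M → ℝ} (hy : ∀ m, 0 ≤ y m) (hτ : 0 ≤ τ) (hG : G.PosSemidef)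
    (hinterp : ∀ m, pairIP (A m) (b m) G F ≤ 0) (hinit : pairIP A₀ b₀ G F + c₀ ≤ 0)
    (hslack : (∑ m, y m • A m - X + τ • A₀ - Aobj).PosSemidef)
    (hbal : ∑ m, y m • b m - Y + τ • b₀ - bobj = 0) :
    pairIP Aobj bobj G F + pairIP X Y G F ≤ -(c₀ * τ) := by
  set P := ∑ m, y m • A m - X + τ • A₀ - Aobj
  have hA : Aobj = ∑ m, y m • A m - X + τ • A₀ - P := (sub_sub_cancel _ _).symm
  have hb : bobj = ∑ m, y m • b m - Y + τ • b₀ - 0 := by rw [sub_zero, ← sub_eq_zero.mp hbal]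
  have hdecomp : pairIP Aobj bobj G F = ∑ m, y m * pairIP (A m) (b m) G F - pairIP X Y G F
      + τ * pairIP A₀ b₀ G F - (P * G).trace := by
    rw [hA, hb]
    simp only [pairIP_sub_left, pairIP_add_left, pairIP_sum_left, pairIP_smul_left,
      pairIP_zero_left_vec]
  have hconstr : ∑ m, y m * pairIP (A m) (b m) G F ≤ 0 :=
    Finset.sum_nonpos fun m _ ↦ mul_nonpos_of_nonneg_of_nonpos (hy m) (hinterp m)
  have hinit_mul : τ * (pairIP A₀ b₀ G F + c₀) ≤ 0 := mul_nonpos_of_nonneg_of_nonpos hτ hinit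
  linarith [hslack.trace_mul_nonneg hG]

lemma sum_sum_mul_le_of_le_dual_bound {ι κ : Type*} [Fintype ι] [Fintype κ]
    {α f ν : ι → κ → ℝ} {p s : ι → ℝ} {c : κ → ℝ} {t lam ε : ℝ}
    (hα : ∀ i j, 0 ≤ α i j) (hrow : ∀ i, ∑ j, α i j = p i) (hp : ∑ i, p i = 1)
    (hc : ∑ i, ∑ j, α i j * c j = 0) (hν : ∑ i, ∑ j, α i j * ν i j ≤ ε) (hlam : 0 ≤ lam)
    (hf : ∀ i j, f i j ≤ s i - c j * t - lam * ε + lam * ν i j) :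
    ∑ i, ∑ j, α i j * f i j ≤ ∑ i, p i * s i := by
  have hrow_expand : ∀ i, ∑ j, α i j * (s i - c j * t - lam * ε + lam * ν i j)
      = p i * s i - lam * ε * p i - t * ∑ j, α i j * c j + lam * ∑ j, α i j * ν i j := by
    intro i
    rw [← hrow i, Finset.mul_sum, Finset.mul_sum, Finset.sum_mul, Finset.mul_sum,
      ← Finset.sum_sub_distrib, ← Finset.sum_sub_distrib, ← Finset.sum_add_distrib]
    exact Finset.sum_congr rfl fun j _ ↦ by ring
  calc ∑ i, ∑ j, α i j * f i j
      ≤ ∑ i, ∑ j, α i j * (s i - c j * t - lam * ε + lam * ν i j) :=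
        Finset.sum_le_sum fun i _ ↦ Finset.sum_le_sum fun j _ ↦
          mul_le_mul_of_nonneg_left (hf i j) (hα i j)
    _ = ∑ i, p i * s i - lam * ε * ∑ i, p i - t * ∑ i, ∑ j, α i j * c j
          + lam * ∑ i, ∑ j, α i j * ν i j := by
        simp only [hrow_expand, Finset.sum_add_distrib, Finset.sum_sub_distrib, Finset.mul_sum]
    _ ≤ ∑ i, p i * s i := by
        rw [hp, hc]
        linarith [mul_le_mul_of_nonneg_left hν hlam]

theorem dro_pep_weak_duality_general
    (K N J : ℕ) (hN : 1 ≤ N)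
    (M : Type*) [Fintype M]
    (A : M → Matrix (Fin (K + 2)) (Fin (K + 2)) ℝ) (b : M → Fin (K + 1) → ℝ)
    (A₀ : Matrix (Fin (K + 2)) (Fin (K + 2)) ℝ) (b₀ : Fin (K + 1) → ℝ) (c₀ : ℝ)
    (Aobj : Fin J → Matrix (Fin (K + 2)) (Fin (K + 2)) ℝ)
    (bobj : Fin J → Fin (K + 1) → ℝ) (cobj : Fin J → ℝ)
    (Ghat : Fin N → Matrix (Fin (K + 2)) (Fin (K + 2)) ℝ)
    (Fhat : Fin N → Fin (K + 1) → ℝ)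
    (ε : ℝ)
    -- a primal-feasible point
    (α : Fin N → Fin J → ℝ)
    (G : Fin N → Fin J → Matrix (Fin (K + 2)) (Fin (K + 2)) ℝ)
    (F : Fin N → Fin J → Fin (K + 1) → ℝ)
    (hα : ∀ i j, 0 ≤ α i j)
    (hαrow : ∀ i, ∑ j, α i j = 1 / (N : ℝ))
    (hαobj : ∑ i, ∑ j, α i j * cobj j = 0)
    (hGpsd : ∀ i j, (G i j).PosSemidef)
    (hGinterp : ∀ i j, ∀ m, pairIP (A m) (b m) (G i j) (F i j) ≤ 0)
    (hGinit : ∀ i j, pairIP A₀ b₀ (G i j) (F i j) + c₀ ≤ 0)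
    (hwass : ∑ i, ∑ j, α i j * pairNorm (G i j - Ghat i) (F i j - Fhat i) ≤ ε)
    -- a dual-feasible point
    (s : Fin N → ℝ) (t lam : ℝ) (hlam : 0 ≤ lam)
    (τ : Fin N → Fin J → ℝ) (hτ : ∀ i j, 0 ≤ τ i j)
    (y : Fin N → Fin J → M → ℝ) (hy : ∀ i j m, 0 ≤ y i j m)
    (X : Fin N → Fin J → Matrix (Fin (K + 2)) (Fin (K + 2)) ℝ)
    (Y : Fin N → Fin J → Fin (K + 1) → ℝ)
    (hd1 : ∀ i j,
      cobj j * t - c₀ * τ i j - pairIP (X i j) (Y i j) (Ghat i) (Fhat i) + lam * ε ≤ s i)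
    (hd2 : ∀ i j, (∑ m, y i j m • A m - X i j + τ i j • A₀ - Aobj j).PosSemidef)
    (hd3 : ∀ i j, ∑ m, y i j m • b m - Y i j + τ i j • b₀ - bobj j = 0)
    (hd4 : ∀ i j, pairNorm (X i j) (Y i j) ≤ lam) :
    ∑ i, ∑ j, α i j * pairIP (Aobj j) (bobj j) (G i j) (F i j) ≤
      (1 / (N : ℝ)) * ∑ i, s i := by
  have hmass : ∑ _i : Fin N, 1 / (N : ℝ) = 1 := by
    rw [Finset.sum_const, Finset.card_univ, Fintype.card_fin, nsmul_eq_mul, mul_one_div_cancel]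
    exact Nat.cast_ne_zero.mpr (by omega)
  have hpair : ∀ i j, pairIP (Aobj j) (bobj j) (G i j) (F i j) ≤
      s i - cobj j * t - lam * ε + lam * pairNorm (G i j - Ghat i) (F i j - Fhat i) := fun i j ↦ by
    linarith [hd1 i j, pairIP_sub_le_of_pairNorm_le (hd4 i j) (G i j) (Ghat i) (F i j) (Fhat i),
      pairIP_add_le_of_dual_certificate (hy i j) (hτ i j) (hGpsd i j) (hGinterp i j) (hGinit i j)
        (hd2 i j) (hd3 i j)]
  rw [Finset.mul_sum]
  exact sum_sum_mul_le_of_le_dual_bound hα hαrow hmass hαobj hwass hlam hpair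

/-- **Weak duality for the DRO-PEP problem**: the objective value of any primal-feasible
point is at most the objective value of any dual-feasible point. -/
theorem dro_pep_weak_duality
    (K N J : ℕ) (hN : 1 ≤ N) (hJ : 1 ≤ J)
    (M : Type*) [Fintype M]
    (A : M → Matrix (Fin (K + 2)) (Fin (K + 2)) ℝ) (b : M → Fin (K + 1) → ℝ)
    (A₀ : Matrix (Fin (K + 2)) (Fin (K + 2)) ℝ) (b₀ : Fin (K + 1) → ℝ) (c₀ : ℝ)
    (Aobj : Fin J → Matrix (Fin (K + 2)) (Fin (K + 2)) ℝ)
    (bobj : Fin J → Fin (K + 1) → ℝ) (cobj : Fin J → ℝ)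
    (Ghat : Fin N → Matrix (Fin (K + 2)) (Fin (K + 2)) ℝ)
    (Fhat : Fin N → Fin (K + 1) → ℝ)
    (ε : ℝ) (hε : 0 ≤ ε)
    -- a primal-feasible point
    (α : Fin N → Fin J → ℝ)
    (G : Fin N → Fin J → Matrix (Fin (K + 2)) (Fin (K + 2)) ℝ)
    (F : Fin N → Fin J → Fin (K + 1) → ℝ)
    (hα : ∀ i j, 0 ≤ α i j)
    (hαrow : ∀ i, ∑ j, α i j = 1 / (N : ℝ))
    (hαobj : ∑ i, ∑ j, α i j * cobj j = 0)
    (hGpsd : ∀ i j, (G i j).PosSemidef)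
    (hGinterp : ∀ i j, ∀ m, pairIP (A m) (b m) (G i j) (F i j) ≤ 0)
    (hGinit : ∀ i j, pairIP A₀ b₀ (G i j) (F i j) + c₀ ≤ 0)
    (hwass : ∑ i, ∑ j, α i j * pairNorm (G i j - Ghat i) (F i j - Fhat i) ≤ ε)
    -- a dual-feasible point
    (s : Fin N → ℝ) (t lam : ℝ) (hlam : 0 ≤ lam)
    (τ : Fin N → Fin J → ℝ) (hτ : ∀ i j, 0 ≤ τ i j)
    (y : Fin N → Fin J → M → ℝ) (hy : ∀ i j m, 0 ≤ y i j m)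
    (X : Fin N → Fin J → Matrix (Fin (K + 2)) (Fin (K + 2)) ℝ)
    (hXsymm : ∀ i j, (X i j).IsSymm)
    (Y : Fin N → Fin J → Fin (K + 1) → ℝ)
    (hd1 : ∀ i j,
      cobj j * t - c₀ * τ i j - pairIP (X i j) (Y i j) (Ghat i) (Fhat i) + lam * ε ≤ s i)
    (hd2 : ∀ i j, (∑ m, y i j m • A m - X i j + τ i j • A₀ - Aobj j).PosSemidef)
    (hd3 : ∀ i j, ∑ m, y i j m • b m - Y i j + τ i j • b₀ - bobj j = 0)
    (hd4 : ∀ i j, pairNorm (X i j) (Y i j) ≤ lam) :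
    ∑ i, ∑ j, α i j * pairIP (Aobj j) (bobj j) (G i j) (F i j) ≤
      (1 / (N : ℝ)) * ∑ i, s i :=
  dro_pep_weak_duality_general K N J hN M A b A₀ b₀ c₀ Aobj bobj cobj Ghat Fhat ε α G F hα hαrow
    hαobj hGpsd hGinterp hGinit hwass s t lam hlam τ hτ y hy X Y hd1 hd2 hd3 hd4
end

section
/- Let S ⊆ S^{K+2} × ℝ^{K+1} be the support set F∩X, assumed nonempty and compact, define φ(G,F) = ⟨(A_obj, b_obj), (G,F)⟩, let Ẑ₁, …, Ẑ_N ∈ S, and let α ∈ (0, 1]. For ε ≥ 0 define W(ε) = sup { (1/(αN)) Σ_{i=1}^N a_i φ(Z_i) : a_i ∈ [0,1] for all i, (1/N) Σ_{i=1}^N a_i = α, Z_i ∈ S for all i, and (1/N) Σ_{i=1}^N a_i ‖Z_i − Ẑ_i‖ ≤ ε }. Then W(ε) converges, as ε → 0⁺, to the in-sample conditional value-at-risk inf_{t ∈ ℝ} ( t + (1/(αN)) Σ_{i=1}^N max(φ(Ẑ_i) − t, 0) ). -/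
open Matrix

/-- The support set `F ∩ X` of lifted representations. -/
def supportSet {K : ℕ} {M : Type*} [Fintype M]
    (A : M → Matrix (Fin (K + 2)) (Fin (K + 2)) ℝ) (b : M → Fin (K + 1) → ℝ)
    (A₀ : Matrix (Fin (K + 2)) (Fin (K + 2)) ℝ) (b₀ : Fin (K + 1) → ℝ) (c₀ : ℝ) :
    Set (Matrix (Fin (K + 2)) (Fin (K + 2)) ℝ × (Fin (K + 1) → ℝ)) :=
  {Z | Z.1.PosSemidef ∧ (∀ m, pairIP (A m) (b m) Z.1 Z.2 ≤ 0) ∧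
    pairIP A₀ b₀ Z.1 Z.2 + c₀ ≤ 0}

/-!
With `g i = φ(Ẑ_i)`, the CVaR is the largest weighted mean `(1/(αN)) ∑ a_i g_i` over weights
`a ∈ [0,1]^N` of total mass `αN`: weak duality is the pointwise bound `a x ≤ a t + (x - t)₊`, and
equality holds when `t` is an `α`-quantile of `g` and `a` is `1` above `t`, `0` below it.
Taking `Z = Ẑ` gives `W(ε) ≥ CVaR`; conversely `φ` is `‖(A_obj, b_obj)‖`-Lipschitz by
Cauchy–Schwarz, so moving the `Z_i` within the transport budget `ε` raises the weighted mean by at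
most `‖(A_obj, b_obj)‖ ε / α`.
-/

open Finset Filter Topology

section CVaR

variable {ι : Type*} [Fintype ι]

/-- Conditional value-at-risk at level `α` of the uniform distribution on the values `g i`. -/
noncomputable def cvar (α : ℝ) (g : ι → ℝ) : ℝ :=
  sInf {v | ∃ t : ℝ, v = t + 1 / (α * Fintype.card ι) * ∑ i, max (g i - t) 0}

lemma mul_le_mul_add_max_sub {a : ℝ} (ha : a ∈ Set.Icc (0 : ℝ) 1) (x t : ℝ) :
    a * x ≤ a * t + max (x - t) 0 := by
  rcases le_total x t with h | h
  · rw [max_eq_right (by linarith)]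
    nlinarith [ha.1]
  · rw [max_eq_left (by linarith)]
    nlinarith [ha.2]

/-- Complementary slackness for `mul_le_mul_add_max_sub`. -/
lemma mul_eq_mul_add_max_sub {a x t : ℝ} (h₁ : t < x → a = 1) (h₀ : x < t → a = 0) :
    a * x = a * t + max (x - t) 0 := by
  rcases lt_trichotomy x t with h | rfl | h
  · rw [h₀ h, max_eq_right (by linarith)]
    ring
  · simp
  · rw [h₁ h, max_eq_left (by linarith)]
    ring

lemma exists_quantile [Nonempty ι] (g : ι → ℝ) {β : ℝ} (hβ₀ : 0 ≤ β)
    (hβ : β ≤ Fintype.card ι) :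
    ∃ t, (#{i | t < g i} : ℝ) ≤ β ∧ β ≤ #{i | t ≤ g i} := by
  set T : Finset ι := {j | β ≤ #{i | g j ≤ g i}}
  obtain ⟨j₀, -, hj₀⟩ := exists_min_image univ g univ_nonempty
  have hT : T.Nonempty :=
    ⟨j₀, by simpa [T, filter_true_of_mem fun i _ => hj₀ i (mem_univ i)] using hβ⟩
  -- the largest value `t` having at least `β` values above it
  obtain ⟨j, hjT, hjmax⟩ := exists_max_image T g hT
  refine ⟨g j, ?_, by simpa [T] using hjT⟩
  by_contra! hlt
  have hP : ({i | g j < g i} : Finset ι).Nonempty := by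
    rw [← card_pos]
    exact_mod_cast hβ₀.trans_lt hlt
  obtain ⟨k, hkP, hkmin⟩ := exists_min_image _ g hP
  have hkT : k ∈ T := by
    simp only [T, mem_filter, mem_univ, true_and]
    refine hlt.le.trans ?_
    exact_mod_cast card_le_card fun i hi => by simpa using hkmin i hi
  exact (hjmax k hkT).not_gt (by simpa using hkP)

lemma exists_weights_of_quantile (g : ι → ℝ) {t β : ℝ} (hlo : (#{i | t < g i} : ℝ) ≤ β)
    (hhi : β ≤ #{i | t ≤ g i}) :
    ∃ a : ι → ℝ, (∀ i, a i ∈ Set.Icc (0 : ℝ) 1) ∧ (∀ i, t < g i → a i = 1) ∧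
      (∀ i, g i < t → a i = 0) ∧ ∑ i, a i = β := by
  let w : ℝ → ι → ℝ := fun s i => if t < g i then 1 else if g i = t then s else 0
  have hcont : Continuous fun s => ∑ i, w s i :=
    continuous_finsetSum _ fun i _ => by
      simp only [w]
      split_ifs <;> fun_prop
  have h₀ : ∑ i, w 0 i = #{i | t < g i} := by
    rw [card_filter, Nat.cast_sum]
    refine sum_congr rfl fun i _ => ?_
    simp only [w]
    split_ifs <;> simp
  have h₁ : ∑ i, w 1 i = #{i | t ≤ g i} := by
    rw [card_filter, Nat.cast_sum]
    refine sum_congr rfl fun i _ => ?_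
    rcases lt_trichotomy (g i) t with h | h | h
    · simp [w, h.not_gt, h.ne, h.not_ge]
    · simp [w, h]
    · simp [w, h, h.le]
  obtain ⟨s, hs, hsum⟩ :=
    intermediate_value_Icc zero_le_one hcont.continuousOn ⟨h₀ ▸ hlo, h₁ ▸ hhi⟩
  refine ⟨w s, fun i => ?_, fun i hi => if_pos hi, fun i hi => ?_, hsum⟩
  · simp only [w]
    split_ifs
    exacts [⟨zero_le_one, le_rfl⟩, hs, ⟨le_rfl, zero_le_one⟩]
  · simp [w, hi.not_gt, hi.ne]

variable [Nonempty ι] {α : ℝ}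

lemma mean_le_cvar_objective (hα : 0 < α) (g : ι → ℝ) {a : ι → ℝ}
    (ha : ∀ i, a i ∈ Set.Icc (0 : ℝ) 1) (hsum : ∑ i, a i = α * Fintype.card ι) (t : ℝ) :
    1 / (α * Fintype.card ι) * ∑ i, a i * g i ≤
      t + 1 / (α * Fintype.card ι) * ∑ i, max (g i - t) 0 := by
  have hβ : 0 < α * Fintype.card ι := mul_pos hα (by exact_mod_cast Fintype.card_pos)
  have hle : ∑ i, a i * g i ≤ (∑ i, a i) * t + ∑ i, max (g i - t) 0 := by
    rw [sum_mul, ← sum_add_distrib]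
    exact sum_le_sum fun i _ => mul_le_mul_add_max_sub (ha i) (g i) t
  rw [hsum] at hle
  calc 1 / (α * Fintype.card ι) * ∑ i, a i * g i
      ≤ 1 / (α * Fintype.card ι) * (α * Fintype.card ι * t + ∑ i, max (g i - t) 0) := by
        gcongr
    _ = t + 1 / (α * Fintype.card ι) * ∑ i, max (g i - t) 0 := by
        field_simp

lemma mean_le_cvar (hα : 0 < α) (g : ι → ℝ) {a : ι → ℝ}
    (ha : ∀ i, a i ∈ Set.Icc (0 : ℝ) 1) (hsum : ∑ i, a i = α * Fintype.card ι) :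
    1 / (α * Fintype.card ι) * ∑ i, a i * g i ≤ cvar α g :=
  le_csInf ⟨_, 0, rfl⟩ fun _ ⟨t, hv⟩ => hv ▸ mean_le_cvar_objective hα g ha hsum t

/-- Dual representation of the CVaR: it is the largest mean of `g` under weights in `[0, 1]`
of total mass `α · |ι|`. -/
lemma exists_mean_eq_cvar (hα : α ∈ Set.Ioc (0 : ℝ) 1) (g : ι → ℝ) :
    ∃ a : ι → ℝ, (∀ i, a i ∈ Set.Icc (0 : ℝ) 1) ∧ ∑ i, a i = α * Fintype.card ι ∧
      1 / (α * Fintype.card ι) * ∑ i, a i * g i = cvar α g := by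
  have hβ : α * Fintype.card ι ≤ Fintype.card ι :=
    mul_le_of_le_one_left (Nat.cast_nonneg _) hα.2
  obtain ⟨t, hlo, hhi⟩ := exists_quantile g (by have := hα.1; positivity) hβ
  obtain ⟨a, ha, ha₁, ha₀, hsum⟩ := exists_weights_of_quantile g hlo hhi
  have hslack : ∑ i, a i * g i = α * Fintype.card ι * t + ∑ i, max (g i - t) 0 := by
    rw [← hsum, sum_mul, ← sum_add_distrib]
    exact sum_congr rfl fun i _ => mul_eq_mul_add_max_sub (ha₁ i) (ha₀ i)
  have hmem : 1 / (α * Fintype.card ι) * ∑ i, a i * g i =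
      t + 1 / (α * Fintype.card ι) * ∑ i, max (g i - t) 0 := by
    have : 0 < α * Fintype.card ι := mul_pos hα.1 (by exact_mod_cast Fintype.card_pos)
    rw [hslack, mul_add, ← mul_assoc, one_div_mul_cancel this.ne', one_mul]
  refine ⟨a, ha, hsum, le_antisymm (mean_le_cvar hα.1 g ha hsum) ?_⟩
  exact csInf_le ⟨_, fun _ ⟨s, hv⟩ => hv ▸ mean_le_cvar_objective hα.1 g ha hsum s⟩ ⟨t, hmem⟩

end CVaR

section Pairs

variable {K : ℕ}

lemma pairNorm_zero : pairNorm (0 : Matrix (Fin (K + 2)) (Fin (K + 2)) ℝ) (0 : Fin (K + 1) → ℝ) = 0 := by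
  simp [pairNorm]

lemma pairIP_sub (X G G' : Matrix (Fin (K + 2)) (Fin (K + 2)) ℝ) (Y F F' : Fin (K + 1) → ℝ) :
    pairIP X Y (G - G') (F - F') = pairIP X Y G F - pairIP X Y G' F' := by
  simp only [pairIP, Matrix.trace_sub, Pi.sub_apply, mul_sub, sum_sub_distrib]
  ring

/-- Cauchy–Schwarz for `pairIP`, read as a dot product over `(Fin (K+2) × Fin (K+2)) ⊕ Fin (K+1)`. -/
lemma pairIP_le_pairNorm_mul (X G : Matrix (Fin (K + 2)) (Fin (K + 2)) ℝ) (Y F : Fin (K + 1) → ℝ) :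
    pairIP X Y G F ≤ pairNorm X Y * pairNorm G F := by
  have h := Real.sum_mul_le_sqrt_mul_sqrt univ
    (Sum.elim (fun p : Fin (K + 2) × Fin (K + 2) => X p.1 p.2) Y)
    (Sum.elim (fun p : Fin (K + 2) × Fin (K + 2) => G p.2 p.1) F)
  simp only [Fintype.sum_sum_type, Fintype.sum_prod_type, Sum.elim_inl, Sum.elim_inr] at h
  rw [sum_comm (f := fun x y => G y x ^ 2)] at h
  simpa [pairIP, pairNorm, Matrix.trace, Matrix.mul_apply] using h

lemma sum_mul_pairIP_le {ι : Type*} [Fintype ι] (X : Matrix (Fin (K + 2)) (Fin (K + 2)) ℝ)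
    (Y : Fin (K + 1) → ℝ) {a : ι → ℝ} (ha : ∀ i, 0 ≤ a i)
    (Z Z' : ι → Matrix (Fin (K + 2)) (Fin (K + 2)) ℝ × (Fin (K + 1) → ℝ)) :
    ∑ i, a i * pairIP X Y (Z i).1 (Z i).2 ≤ ∑ i, a i * pairIP X Y (Z' i).1 (Z' i).2 +
      pairNorm X Y * ∑ i, a i * pairNorm ((Z i).1 - (Z' i).1) ((Z i).2 - (Z' i).2) := by
  rw [mul_sum, ← sum_add_distrib]
  refine sum_le_sum fun i _ => ?_
  have h := pairIP_le_pairNorm_mul X ((Z i).1 - (Z' i).1) Y ((Z i).2 - (Z' i).2)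
  rw [pairIP_sub] at h
  nlinarith [mul_le_mul_of_nonneg_left h (ha i)]

end Pairs

lemma tendsto_sSup_of_mem_of_le_add_mul {S : ℝ → Set ℝ} {V C : ℝ}
    (hmem : ∀ ε > 0, V ∈ S ε) (hle : ∀ ε > 0, ∀ v ∈ S ε, v ≤ V + C * ε) :
    Tendsto (fun ε => sSup (S ε)) (𝓝[>] 0) (𝓝 V) := by
  have hupper : Tendsto (fun ε : ℝ => V + C * ε) (𝓝[>] 0) (𝓝 V) := by
    have : Tendsto (fun ε : ℝ => V + C * ε) (𝓝 0) (𝓝 (V + C * 0)) :=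
      (by fun_prop : Continuous fun ε : ℝ => V + C * ε).tendsto 0
    rw [mul_zero, add_zero] at this
    exact this.mono_left nhdsWithin_le_nhds
  refine tendsto_of_tendsto_of_tendsto_of_le_of_le' tendsto_const_nhds hupper ?_ ?_
  · filter_upwards [self_mem_nhdsWithin] with ε hε
    exact le_csSup ⟨_, hle ε hε⟩ (hmem ε hε)
  · filter_upwards [self_mem_nhdsWithin] with ε hε
    exact csSup_le ⟨V, hmem ε hε⟩ (hle ε hε)

theorem dro_pep_cvar_radius_to_zero_general
    (K N : ℕ) (hN : 1 ≤ N)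
    (M : Type*) [Fintype M]
    (A : M → Matrix (Fin (K + 2)) (Fin (K + 2)) ℝ) (b : M → Fin (K + 1) → ℝ)
    (A₀ : Matrix (Fin (K + 2)) (Fin (K + 2)) ℝ) (b₀ : Fin (K + 1) → ℝ) (c₀ : ℝ)
    (Aobj : Matrix (Fin (K + 2)) (Fin (K + 2)) ℝ) (bobj : Fin (K + 1) → ℝ)
    (Zhat : Fin N → Matrix (Fin (K + 2)) (Fin (K + 2)) ℝ × (Fin (K + 1) → ℝ))
    (hZhat : ∀ i, Zhat i ∈ supportSet A b A₀ b₀ c₀)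
    (α : ℝ) (hα : α ∈ Set.Ioc (0 : ℝ) 1) :
    Filter.Tendsto
      (fun ε : ℝ => sSup {v : ℝ |
        ∃ (a : Fin N → ℝ)
          (Z : Fin N → Matrix (Fin (K + 2)) (Fin (K + 2)) ℝ × (Fin (K + 1) → ℝ)),
          (∀ i, a i ∈ Set.Icc (0 : ℝ) 1) ∧
          (1 / (N : ℝ)) * ∑ i, a i = α ∧
          (∀ i, Z i ∈ supportSet A b A₀ b₀ c₀) ∧
          (1 / (N : ℝ)) * ∑ i, a i * pairNorm ((Z i).1 - (Zhat i).1) ((Z i).2 - (Zhat i).2)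
            ≤ ε ∧
          v = (1 / (α * N)) * ∑ i, a i * pairIP Aobj bobj (Z i).1 (Z i).2})
      (nhdsWithin 0 (Set.Ioi 0))
      (nhds (sInf {v : ℝ | ∃ t : ℝ,
        v = t + (1 / (α * N)) * ∑ i, max (pairIP Aobj bobj (Zhat i).1 (Zhat i).2 - t) 0})) := by
  have hNpos : (0 : ℝ) < N := by exact_mod_cast hN
  have : Nonempty (Fin N) := ⟨⟨0, hN⟩⟩
  set g : Fin N → ℝ := fun i => pairIP Aobj bobj (Zhat i).1 (Zhat i).2
  have hcard : (Fintype.card (Fin N) : ℝ) = N := by simp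
  rw [show sInf _ = cvar α g by simp [cvar, g]]
  obtain ⟨a₀, ha₀, hsum₀, hmean₀⟩ := exists_mean_eq_cvar hα g
  rw [hcard] at hsum₀ hmean₀
  refine tendsto_sSup_of_mem_of_le_add_mul (C := pairNorm Aobj bobj / α) (fun ε hε => ?_) ?_
  · refine ⟨a₀, Zhat, ha₀, by rw [hsum₀]; field_simp, hZhat, ?_, hmean₀.symm⟩
    simp [pairNorm_zero, hε.le]
  · rintro ε - _ ⟨a, Z, ha, hmass, -, hdist, rfl⟩
    have hsum : ∑ i, a i = α * N := by
      field_simp at hmass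
      linarith
    have hmean : 1 / (α * N) * ∑ i, a i * g i ≤ cvar α g :=
      hcard ▸ mean_le_cvar hα.1 g ha (hcard ▸ hsum)
    have hshift := sum_mul_pairIP_le Aobj bobj (fun i => (ha i).1) Z Zhat
    have hL : 0 ≤ pairNorm Aobj bobj / α := div_nonneg (Real.sqrt_nonneg _) hα.1.le
    calc 1 / (α * N) * ∑ i, a i * pairIP Aobj bobj (Z i).1 (Z i).2
        ≤ 1 / (α * N) * (∑ i, a i * g i + pairNorm Aobj bobj *
            ∑ i, a i * pairNorm ((Z i).1 - (Zhat i).1) ((Z i).2 - (Zhat i).2)) :=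
          mul_le_mul_of_nonneg_left hshift (one_div_nonneg.2 (mul_pos hα.1 hNpos).le)
      _ = 1 / (α * N) * ∑ i, a i * g i + pairNorm Aobj bobj / α *
            (1 / N * ∑ i, a i * pairNorm ((Z i).1 - (Zhat i).1) ((Z i).2 - (Zhat i).2)) := by
          field_simp
      _ ≤ cvar α g + pairNorm Aobj bobj / α * ε :=
          add_le_add hmean (mul_le_mul_of_nonneg_left hdist hL)

/-- **Small-radius limit of the DRO-PEP value (CVaR case).** As the Wasserstein radius
`ε` tends to `0⁺`, the worst-case CVaR value `W(ε)` converges to the in-sample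
conditional value-at-risk of the performance metric. -/
theorem dro_pep_cvar_radius_to_zero
    (K N : ℕ) (hN : 1 ≤ N)
    (M : Type*) [Fintype M]
    (A : M → Matrix (Fin (K + 2)) (Fin (K + 2)) ℝ) (b : M → Fin (K + 1) → ℝ)
    (A₀ : Matrix (Fin (K + 2)) (Fin (K + 2)) ℝ) (b₀ : Fin (K + 1) → ℝ) (c₀ : ℝ)
    (hne : (supportSet A b A₀ b₀ c₀).Nonempty)
    (hcomp : IsCompact (supportSet A b A₀ b₀ c₀))
    (Aobj : Matrix (Fin (K + 2)) (Fin (K + 2)) ℝ) (bobj : Fin (K + 1) → ℝ)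
    (Zhat : Fin N → Matrix (Fin (K + 2)) (Fin (K + 2)) ℝ × (Fin (K + 1) → ℝ))
    (hZhat : ∀ i, Zhat i ∈ supportSet A b A₀ b₀ c₀)
    (α : ℝ) (hα : α ∈ Set.Ioc (0 : ℝ) 1) :
    Filter.Tendsto
      (fun ε : ℝ => sSup {v : ℝ |
        ∃ (a : Fin N → ℝ)
          (Z : Fin N → Matrix (Fin (K + 2)) (Fin (K + 2)) ℝ × (Fin (K + 1) → ℝ)),
          (∀ i, a i ∈ Set.Icc (0 : ℝ) 1) ∧
          (1 / (N : ℝ)) * ∑ i, a i = α ∧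
          (∀ i, Z i ∈ supportSet A b A₀ b₀ c₀) ∧
          (1 / (N : ℝ)) * ∑ i, a i * pairNorm ((Z i).1 - (Zhat i).1) ((Z i).2 - (Zhat i).2)
            ≤ ε ∧
          v = (1 / (α * N)) * ∑ i, a i * pairIP Aobj bobj (Z i).1 (Z i).2})
      (nhdsWithin 0 (Set.Ioi 0))
      (nhds (sInf {v : ℝ | ∃ t : ℝ,
        v = t + (1 / (α * N)) * ∑ i, max (pairIP Aobj bobj (Zhat i).1 (Zhat i).2 - t) 0})) :=
  dro_pep_cvar_radius_to_zero_general K N hN M A b A₀ b₀ c₀ Aobj bobj Zhat hZhat α hα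
end
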